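/- Let (a_{n,k}) be a lower triangular nonnegative matrix with row sums equal to 1 satisfying a_μ ≤ (K+1)·a_{n,n} for all μ ≤ n (e.g., under the HBVS condition), and let w be a modulus-of-continuity-type function satisfying the conditions (u^{p/q} ∫_u^π w(t)^p/t^{1+p/q} dt)^{1/p} = O(u·H(u)) and ∫_0^t H(u)du = O(t·H(t)) as u, t → 0⁺, with 1 < p ≤ q. Then ∑_{k=0}^n a_{n,k} · w(π/(k+1))^q = O((a_{n,n}·H(a_{n,n}))^q) as n → ∞, provided a_{n,n} → 0. -/

import Mathlib

/-!
Put `m = a_{n,n}`, `r = p/q`, `s = q/p` and `I(m) = ∫_m^π w(t)^p / t^(1+r) dt`. Condition (6)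
turns `(m^r I(m))^s = m I(m)^s` into `O((m H(m))^q)`, so it suffices to bound the row sum by a
multiple of `m I(m)^s`. Cut the row at `M = ⌊1/m⌋`. Beyond `M`, monotonicity of `w` and
`∑ₖ a_{n,k} = 1` leave the single term `w(π/(M+1))^q`, and comparing with the integral over
`[t, 2t]` gives `w(t)^p ≤ 2 (2t)^r I(m)`. Up to `M`, `a_{n,k} ≤ (K+1) m`, and
`∑_{k ≤ M} w(π/(k+1))^q = O(I(m)^s)`: the weights `b_k = w(π/(k+2))^p (k+1)^(r-1)` decrease, each
is at most `2π^r` times the integral over `[π/(k+2), π/(k+1)]`, and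
`∑ₖ (k+1)^(s-1) b_k^s ≤ (∑ₖ b_k)^s`, whose left side is exactly `∑ₖ w(π/(k+2))^q`.
Subadditivity of `w` takes care of the term `k = 0`.
-/

open Real Set Filter MeasureTheory intervalIntegral Finset

noncomputable def modulusDensity (w : ℝ → ℝ) (p r t : ℝ) : ℝ := w t ^ p / t ^ (1 + r)

noncomputable def tailIntegral (w : ℝ → ℝ) (p r u : ℝ) : ℝ :=
  ∫ t in u..π, modulusDensity w p r t

lemma rpow_add_mul_le_rpow_add {s y z b : ℝ} (hs : 1 ≤ s) (hy : 0 ≤ y) (hb : 0 ≤ b) (hz : 0 ≤ z)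
    (hzyb : z ≤ y + b) : y ^ s + z ^ (s - 1) * b ≤ (y + b) ^ s := by
  have hsplit : ∀ x : ℝ, 0 ≤ x → x ^ s = x ^ (s - 1) * x := fun x hx => by
    simpa using rpow_add' hx (by linarith : s - 1 + 1 ≠ 0)
  have hs1 : 0 ≤ s - 1 := by linarith
  calc y ^ s + z ^ (s - 1) * b = y ^ (s - 1) * y + z ^ (s - 1) * b := by rw [hsplit y hy]
    _ ≤ (y + b) ^ (s - 1) * y + (y + b) ^ (s - 1) * b := by
      gcongr ?_ * _ + ?_ * _
      · exact rpow_le_rpow hy (by linarith) hs1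
      · exact rpow_le_rpow hz hzyb hs1
    _ = (y + b) ^ s := by rw [hsplit _ (by positivity)]; ring

lemma sum_range_rpow_mul_rpow_le_rpow_sum {s : ℝ} (hs : 1 ≤ s) {b : ℕ → ℝ} (hb : Antitone b)
    (hb0 : ∀ k, 0 ≤ b k) (N : ℕ) :
    ∑ k ∈ range N, ((k : ℝ) + 1) ^ (s - 1) * b k ^ s ≤ (∑ k ∈ range N, b k) ^ s := by
  induction N with
  | zero => simp [zero_rpow (by linarith : s ≠ 0)]
  | succ N ih =>
    have hsum : N * b N ≤ ∑ k ∈ range N, b k := by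
      simpa using card_nsmul_le_sum (range N) b (b N) fun k hk => hb (mem_range.1 hk).le
    have hterm : ((N : ℝ) + 1) ^ (s - 1) * b N ^ s = ((N + 1) * b N) ^ (s - 1) * b N := by
      rw [mul_rpow (by positivity) (hb0 N), mul_assoc, ← rpow_add_one' (hb0 N) (by linarith)]
      ring_nf
    rw [sum_range_succ, sum_range_succ, hterm]
    calc _ ≤ (∑ k ∈ range N, b k) ^ s + ((N + 1) * b N) ^ (s - 1) * b N := by gcongr
      _ ≤ _ := rpow_add_mul_le_rpow_add hs (sum_nonneg fun k _ => hb0 k) (hb0 N)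
          (mul_nonneg (by positivity) (hb0 N)) (by linarith)

lemma sum_mul_le_mul_sum_add_of_antitone {a G : ℕ → ℝ} {c : ℝ} {n : ℕ} (M : ℕ)
    (ha : ∀ k, 0 ≤ a k) (hsum : ∑ k ∈ range (n + 1), a k ≤ 1) (hac : ∀ k ≤ n, a k ≤ c)
    (hG : Antitone G) (hG0 : ∀ k, 0 ≤ G k) :
    ∑ k ∈ range (n + 1), a k * G k ≤ c * ∑ k ∈ range (M + 1), G k + G M := by
  have hc : 0 ≤ c := (ha 0).trans (hac 0 n.zero_le)
  rw [← sum_filter_add_sum_filter_not (range (n + 1)) (· ≤ M)]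
  gcongr ?_ + ?_
  · calc ∑ k ∈ range (n + 1) with k ≤ M, a k * G k
        ≤ ∑ k ∈ range (n + 1) with k ≤ M, c * G k := by
          refine sum_le_sum fun k hk => mul_le_mul_of_nonneg_right (hac k ?_) (hG0 k)
          simp only [mem_filter, Finset.mem_range] at hk
          omega
      _ ≤ c * ∑ k ∈ range (M + 1), G k := by
          rw [← mul_sum]
          refine mul_le_mul_of_nonneg_left (sum_le_sum_of_subset_of_nonneg ?_ fun k _ _ => hG0 k) hc
          intro k hk
          simp only [mem_filter, Finset.mem_range] at hk ⊢
          omega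
  · calc ∑ k ∈ range (n + 1) with ¬k ≤ M, a k * G k
        ≤ ∑ k ∈ range (n + 1) with ¬k ≤ M, a k * G M := by
          refine sum_le_sum fun k hk => mul_le_mul_of_nonneg_left (hG ?_) (ha k)
          simp only [mem_filter] at hk
          omega
      _ ≤ 1 * G M := by
          rw [← sum_mul]
          refine mul_le_mul_of_nonneg_right (le_trans ?_ hsum) (hG0 M)
          exact sum_le_sum_of_subset_of_nonneg (filter_subset _ _) fun k _ _ => ha k
      _ = G M := one_mul _

lemma rpow_div_le_rpow_of_rpow_one_div_le {X Y p q : ℝ} (hX : 0 ≤ X) (hq : 0 ≤ q)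
    (h : X ^ (1 / p) ≤ Y) : X ^ (q / p) ≤ Y ^ q := by
  rw [show q / p = 1 / p * q by ring, rpow_mul hX]
  exact rpow_le_rpow (rpow_nonneg hX _) h hq

section Modulus

variable {w : ℝ → ℝ} {p q r : ℝ}

lemma modulusDensity_nonneg (hw : ∀ x, 0 ≤ w x) {t : ℝ} (ht : 0 ≤ t) :
    0 ≤ modulusDensity w p r t :=
  div_nonneg (rpow_nonneg (hw t) p) (rpow_nonneg ht _)

lemma intervalIntegrable_modulusDensity (hmono : Monotone w) (hw : ∀ x, 0 ≤ w x) (hp : 0 ≤ p)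
    {A B : ℝ} (hA : 0 < A) (hB : 0 < B) :
    IntervalIntegrable (modulusDensity w p r) volume A B := by
  have hwp : Monotone fun t => w t ^ p := fun _ _ h => rpow_le_rpow (hw _) (hmono h) hp
  have hcont : ContinuousOn (fun t : ℝ => (t ^ (1 + r))⁻¹) (uIcc A B) := by
    refine ContinuousOn.inv₀ (continuousOn_id.rpow_const fun t ht => Or.inl ?_) fun t ht => ?_
    all_goals
      have : 0 < t := lt_of_lt_of_le (lt_min hA hB) ht.1
      positivity
  exact hwp.intervalIntegrable.mul_continuousOn hcont

lemma mul_le_integral_modulusDensity (hmono : Monotone w) (hw : ∀ x, 0 ≤ w x) (hp : 0 ≤ p)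
    (hr : 0 ≤ 1 + r) {A B : ℝ} (hA : 0 < A) (hAB : A ≤ B) :
    (B - A) * (w A ^ p / B ^ (1 + r)) ≤ ∫ t in A..B, modulusDensity w p r t := by
  have hle : ∀ t ∈ Icc A B, w A ^ p / B ^ (1 + r) ≤ modulusDensity w p r t := fun t ht =>
    div_le_div₀ (rpow_nonneg (hw t) p) (rpow_le_rpow (hw A) (hmono ht.1) hp)
      (rpow_pos_of_pos (hA.trans_le ht.1) _) (rpow_le_rpow (hA.trans_le ht.1).le ht.2 hr)
  simpa [mul_div_assoc] using integral_mono_on hAB intervalIntegrable_const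
    (intervalIntegrable_modulusDensity hmono hw hp hA (hA.trans_le hAB)) hle

lemma integral_modulusDensity_le_tailIntegral (hmono : Monotone w) (hw : ∀ x, 0 ≤ w x)
    (hp : 0 ≤ p) {m A B : ℝ} (hm : 0 < m) (hmA : m ≤ A) (hAB : A ≤ B) (hB : B ≤ π) :
    ∫ t in A..B, modulusDensity w p r t ≤ tailIntegral w p r m := by
  refine integral_mono_interval hmA hAB hB ?_
    (intervalIntegrable_modulusDensity hmono hw hp hm pi_pos)
  filter_upwards [ae_restrict_mem measurableSet_Ioc] with t ht
  exact modulusDensity_nonneg hw (hm.trans ht.1).le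

lemma tailIntegral_nonneg (hw : ∀ x, 0 ≤ w x) {m : ℝ} (hm : 0 < m) (hmπ : m ≤ π) :
    0 ≤ tailIntegral w p r m :=
  integral_nonneg hmπ fun _ ht => modulusDensity_nonneg hw (hm.trans_le ht.1).le

lemma rpow_le_mul_tailIntegral (hmono : Monotone w) (hw : ∀ x, 0 ≤ w x) (hp : 0 ≤ p)
    (hr : 0 ≤ 1 + r) {m t : ℝ} (hm : 0 < m) (hmt : m ≤ t) (ht : 2 * t ≤ π) :
    w t ^ p ≤ 2 * (2 * t) ^ r * tailIntegral w p r m := by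
  have ht0 : 0 < t := hm.trans_le hmt
  have hblock := mul_le_integral_modulusDensity hmono hw hp hr ht0 (by linarith : t ≤ 2 * t)
  have hsub := integral_modulusDensity_le_tailIntegral (r := r) hmono hw hp hm hmt
    (by linarith : t ≤ 2 * t) ht
  have h2t : (2 * t) ^ (1 + r) = 2 * t * (2 * t) ^ r := by
    rw [rpow_add (by positivity), rpow_one]
  rw [h2t] at hblock
  have hblock_eq : (2 * t - t) * (w t ^ p / (2 * t * (2 * t) ^ r)) = w t ^ p / (2 * (2 * t) ^ r) := by
    field_simp; ring
  rw [hblock_eq, div_le_iff₀ (by positivity)] at hblock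
  calc w t ^ p ≤ (∫ s in t..2 * t, modulusDensity w p r s) * (2 * (2 * t) ^ r) := hblock
    _ ≤ tailIntegral w p r m * (2 * (2 * t) ^ r) := by gcongr
    _ = _ := mul_comm _ _

lemma rpow_mul_rpow_sub_one_le_integral (hmono : Monotone w) (hw : ∀ x, 0 ≤ w x) (hp : 0 ≤ p)
    (hr : 0 ≤ 1 + r) {x : ℝ} (hx : 1 ≤ x) :
    w (π / (x + 1)) ^ p * x ^ (r - 1)
      ≤ 2 * π ^ r * ∫ t in π / (x + 1)..π / x, modulusDensity w p r t := by
  have hx0 : 0 < x := by linarith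
  have hAB : π / (x + 1) ≤ π / x := div_le_div_of_nonneg_left pi_pos.le hx0 (by linarith)
  have hblock := mul_le_integral_modulusDensity (r := r) hmono hw hp hr (by positivity) hAB
  set W := w (π / (x + 1)) ^ p
  have hW : 0 ≤ W := rpow_nonneg (hw _) p
  have hxr : 0 < x ^ r := rpow_pos_of_pos hx0 r
  have hπr : 0 < π ^ r := rpow_pos_of_pos pi_pos r
  have hpow : (π / x) ^ (1 + r) = π / x * (π ^ r / x ^ r) := by
    rw [rpow_add (by positivity), rpow_one, div_rpow pi_pos.le hx0.le]
  calc W * x ^ (r - 1) = W * (x ^ r / x) := by rw [rpow_sub_one hx0.ne']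
    _ ≤ W * (2 * x ^ r / (x + 1)) := by
      refine mul_le_mul_of_nonneg_left ?_ hW
      rw [div_le_div_iff₀ hx0 (by linarith)]
      nlinarith
    _ = 2 * π ^ r * ((π / x - π / (x + 1)) * (W / (π / x) ^ (1 + r))) := by
      rw [hpow]; field_simp; ring
    _ ≤ _ := by gcongr

lemma sum_rpow_mul_rpow_sub_one_le_integral (hmono : Monotone w) (hw : ∀ x, 0 ≤ w x)
    (hp : 0 ≤ p) (hr : 0 ≤ 1 + r) (N : ℕ) :
    ∑ j ∈ range N, w (π / (j + 2)) ^ p * ((j : ℝ) + 1) ^ (r - 1)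
      ≤ 2 * π ^ r * ∫ t in π / (N + 1)..π, modulusDensity w p r t := by
  induction N with
  | zero => simp
  | succ N ih =>
    have hblock := rpow_mul_rpow_sub_one_le_integral hmono hw hp hr
      (by linarith [N.cast_nonneg (α := ℝ)] : (1 : ℝ) ≤ N + 1)
    have hsplit := integral_add_adjacent_intervals
      (intervalIntegrable_modulusDensity (r := r) hmono hw hp
        (by positivity : 0 < π / ((N : ℝ) + 1 + 1)) (by positivity : 0 < π / ((N : ℝ) + 1)))
      (intervalIntegrable_modulusDensity (r := r) hmono hw hp (by positivity) pi_pos)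
    rw [sum_range_succ]
    push_cast
    rw [← hsplit, show (N : ℝ) + 2 = N + 1 + 1 by ring]
    linarith

lemma sum_range_rpow_le_rpow_integral (hmono : Monotone w) (hw : ∀ x, 0 ≤ w x) (hp : 0 < p)
    (hpq : p ≤ q) (N : ℕ) :
    ∑ j ∈ range N, w (π / (j + 2)) ^ q
      ≤ (2 * π ^ (p / q) * ∫ t in π / (N + 1)..π, modulusDensity w p (p / q) t) ^ (q / p) := by
  have hq : 0 < q := hp.trans_le hpq
  have hr1 : p / q ≤ 1 := (div_le_one hq).2 hpq
  have hs1 : 1 ≤ q / p := (one_le_div hp).2 hpq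
  set b : ℕ → ℝ := fun j => w (π / (j + 2)) ^ p * ((j : ℝ) + 1) ^ (p / q - 1)
  have hb0 : ∀ j, 0 ≤ b j := fun j => mul_nonneg (rpow_nonneg (hw _) p) (by positivity)
  have hb : Antitone b := fun i j hij => by
    have hij' : (i : ℝ) ≤ j := Nat.cast_le.2 hij
    refine mul_le_mul (rpow_le_rpow (hw _) (hmono ?_) hp.le)
      (rpow_le_rpow_of_nonpos (by positivity) (by linarith) (by linarith)) (by positivity)
      (rpow_nonneg (hw _) p)
    exact div_le_div_of_nonneg_left pi_pos.le (by positivity) (by linarith)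
  have hterm : ∀ j : ℕ, ((j : ℝ) + 1) ^ (q / p - 1) * b j ^ (q / p) = w (π / (j + 2)) ^ q := by
    intro j
    have hexp : (p / q - 1) * (q / p) = -(q / p - 1) := by field_simp; ring
    rw [mul_rpow (rpow_nonneg (hw _) p) (by positivity), ← rpow_mul (hw _),
      ← rpow_mul (by positivity), hexp, rpow_neg (by positivity), mul_div_cancel₀ _ hp.ne']
    field_simp [(rpow_pos_of_pos (by positivity : (0 : ℝ) < j + 1) (q / p - 1)).ne']
  calc ∑ j ∈ range N, w (π / (j + 2)) ^ q
      = ∑ j ∈ range N, ((j : ℝ) + 1) ^ (q / p - 1) * b j ^ (q / p) := by simp only [hterm]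
    _ ≤ (∑ j ∈ range N, b j) ^ (q / p) := sum_range_rpow_mul_rpow_le_rpow_sum hs1 hb hb0 N
    _ ≤ _ := rpow_le_rpow (sum_nonneg fun j _ => hb0 j)
      (sum_rpow_mul_rpow_sub_one_le_integral hmono hw hp.le (by positivity) N) (by positivity)

lemma sum_range_succ_rpow_le (hw : ∀ x, 0 ≤ w x)
    (hsub : ∀ x y : ℝ, 0 ≤ x → 0 ≤ y → w (x + y) ≤ w x + w y) (hq : 0 ≤ q) {M : ℕ} (hM : 1 ≤ M) :
    ∑ k ∈ range (M + 1), w (π / (k + 1)) ^ q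
      ≤ (2 ^ q + 1) * ∑ j ∈ range M, w (π / (j + 2)) ^ q := by
  have hhalf : w π ≤ 2 * w (π / 2) := by
    have := hsub (π / 2) (π / 2) (by positivity) (by positivity)
    rw [add_halves] at this
    linarith
  have hfirst : w (π / 2) ^ q ≤ ∑ j ∈ range M, w (π / (j + 2)) ^ q := by
    simpa using single_le_sum (f := fun j : ℕ => w (π / (j + 2)) ^ q)
      (fun j _ => rpow_nonneg (hw _) q) (mem_range.2 hM)
  have h0 : w π ^ q ≤ 2 ^ q * w (π / 2) ^ q := by
    rw [← mul_rpow (by norm_num) (hw _)]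
    exact rpow_le_rpow (hw _) hhalf hq
  have h1 := mul_le_mul_of_nonneg_left hfirst (rpow_nonneg zero_le_two q)
  rw [sum_range_succ']
  push_cast
  simp only [add_assoc, one_add_one_eq_two, zero_add, div_one]
  linarith

lemma sum_range_succ_rpow_le_rpow_tailIntegral (hmono : Monotone w) (hw : ∀ x, 0 ≤ w x)
    (hsub : ∀ x y : ℝ, 0 ≤ x → 0 ≤ y → w (x + y) ≤ w x + w y) (hp : 0 < p) (hpq : p ≤ q)
    {m : ℝ} {M : ℕ} (hm : 0 < m) (hM : 1 ≤ M) (hmM : m ≤ π / (M + 1)) :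
    ∑ k ∈ range (M + 1), w (π / (k + 1)) ^ q
      ≤ (2 ^ q + 1) * (2 * π ^ (p / q) * tailIntegral w p (p / q) m) ^ (q / p) := by
  have hq : 0 < q := hp.trans_le hpq
  have hπM : π / (M + 1) ≤ π := div_le_self pi_pos.le (by linarith)
  have hJ : 0 ≤ ∫ t in π / (M + 1)..π, modulusDensity w p (p / q) t :=
    integral_nonneg hπM fun t ht => modulusDensity_nonneg hw (hm.trans_le (hmM.trans ht.1)).le
  have hJI := integral_modulusDensity_le_tailIntegral (r := p / q) hmono hw hp.le hm hmM hπM le_rfl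
  refine (sum_range_succ_rpow_le hw hsub hq.le hM).trans
    (mul_le_mul_of_nonneg_left ((sum_range_rpow_le_rpow_integral hmono hw hp hpq M).trans ?_)
      (by positivity))
  gcongr

lemma rpow_le_rpow_tailIntegral (hmono : Monotone w) (hw : ∀ x, 0 ≤ w x) (hp : 0 < p)
    (hq : 0 < q) {m : ℝ} {M : ℕ} (hm : 0 < m) (hM : 1 ≤ M) (hmM : m ≤ π / (M + 1))
    (hMm : 1 ≤ (M + 1) * m) :
    w (π / (M + 1)) ^ q ≤ (2 * (2 * π * m) ^ (p / q) * tailIntegral w p (p / q) m) ^ (q / p) := by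
  have hM' : (1 : ℝ) ≤ M := by exact_mod_cast hM
  have hI : 0 ≤ tailIntegral w p (p / q) m :=
    tailIntegral_nonneg hw hm (hmM.trans (div_le_self pi_pos.le (by linarith)))
  have hle := rpow_le_mul_tailIntegral hmono hw hp.le (by positivity : 0 ≤ 1 + p / q) hm hmM
    (by rw [mul_div_assoc']
        exact div_le_of_le_mul₀ (by positivity) pi_pos.le (by nlinarith [pi_pos]))
  have h2 : (2 * (π / (M + 1))) ^ (p / q) ≤ (2 * π * m) ^ (p / q) := by
    refine rpow_le_rpow (by positivity) ?_ (by positivity)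
    rw [mul_assoc]
    gcongr
    rw [div_le_iff₀ (by positivity)]
    nlinarith [pi_pos]
  rw [show w (π / (M + 1)) ^ q = (w (π / (M + 1)) ^ p) ^ (q / p) by
    rw [← rpow_mul (hw _), mul_div_cancel₀ _ hp.ne']]
  exact rpow_le_rpow (rpow_nonneg (hw _) p) (hle.trans (by gcongr)) (by positivity)

lemma sum_mul_rpow_le_mul_rpow_tailIntegral (hmono : Monotone w) (hw : ∀ x, 0 ≤ w x)
    (hsub : ∀ x y : ℝ, 0 ≤ x → 0 ≤ y → w (x + y) ≤ w x + w y) (hp : 0 < p) (hpq : p ≤ q)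
    {a : ℕ → ℝ} {n : ℕ} {L : ℝ} (ha : ∀ k, 0 ≤ a k) (hsum : ∑ k ∈ range (n + 1), a k ≤ 1)
    (hbound : ∀ k ≤ n, a k ≤ L * a n) (hn : 0 < a n) :
    ∑ k ∈ range (n + 1), a k * w (π / (k + 1)) ^ q
      ≤ ((2 ^ q + 1) * L + 2) * (2 * π ^ (p / q)) ^ (q / p)
        * (a n ^ (p / q) * tailIntegral w p (p / q) (a n)) ^ (q / p) := by
  have hq : 0 < q := hp.trans_le hpq
  set m := a n
  set r := p / q
  set s := q / p
  set I := tailIntegral w p r m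
  have hm1 : m ≤ 1 := (single_le_sum (fun k _ => ha k) (self_mem_range_succ n)).trans hsum
  have hI : 0 ≤ I := tailIntegral_nonneg hw hn (hm1.trans (by linarith [pi_gt_three]))
  have hpow : ∀ x : ℝ, 0 ≤ x → (x ^ r) ^ s = x := fun x hx => by
    rw [← rpow_mul hx, show p / q * (q / p) = 1 by field_simp, rpow_one]
  set M := ⌊1 / m⌋₊
  have hM : 1 ≤ M := Nat.le_floor (by rw [Nat.cast_one, le_div_iff₀ hn]; linarith)
  have hMm : (M : ℝ) * m ≤ 1 := (le_div_iff₀ hn).1 (Nat.floor_le (by positivity))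
  have hMm' : 1 ≤ ((M : ℝ) + 1) * m := (div_le_iff₀ hn).1 (Nat.lt_floor_add_one _).le
  have hmM : m ≤ π / (M + 1) := by
    rw [le_div_iff₀ (by positivity)]; nlinarith [pi_gt_three]
  have hG : Antitone fun k : ℕ => w (π / (k + 1)) ^ q := fun i j hij =>
    rpow_le_rpow (hw _) (hmono (div_le_div_of_nonneg_left pi_pos.le (by positivity)
      (by exact_mod_cast Nat.add_le_add_right hij 1))) hq.le
  calc ∑ k ∈ range (n + 1), a k * w (π / (k + 1)) ^ q
      ≤ L * m * ∑ k ∈ range (M + 1), w (π / (k + 1)) ^ q + w (π / (M + 1)) ^ q :=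
        sum_mul_le_mul_sum_add_of_antitone M ha hsum hbound hG fun k => rpow_nonneg (hw _) q
    _ ≤ L * m * ((2 ^ q + 1) * (2 * π ^ r * I) ^ s) + (2 * (2 * π * m) ^ r * I) ^ s := by
        gcongr
        · exact (ha n).trans (hbound n le_rfl)
        · exact sum_range_succ_rpow_le_rpow_tailIntegral hmono hw hsub hp hpq hn hM hmM
        · exact rpow_le_rpow_tailIntegral hmono hw hp hq hn hM hmM hMm'
    _ = _ := by
        have h2πm : 2 * (2 * π * m) ^ r * I = 2 ^ r * (2 * π ^ r) * m ^ r * I := by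
          rw [mul_rpow (by positivity) hn.le, mul_rpow (by positivity) pi_pos.le]; ring
        have e1 : (2 * π ^ r * I) ^ s = (2 * π ^ r) ^ s * I ^ s := mul_rpow (by positivity) hI
        have e2 : (m ^ r * I) ^ s = m * I ^ s := by rw [mul_rpow (by positivity) hI, hpow m hn.le]
        have e3 : (2 ^ r * (2 * π ^ r) * m ^ r * I) ^ s = 2 * (2 * π ^ r) ^ s * m * I ^ s := by
          rw [mul_rpow (by positivity) hI, mul_rpow (by positivity) (by positivity),
            mul_rpow (by positivity) (by positivity), hpow 2 (by norm_num), hpow m hn.le]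
        rw [h2πm, e1, e2, e3]
        ring

end Modulus

theorem matrix_modulus_sum_bound_general
    (a : ℕ → ℕ → ℝ) (w H : ℝ → ℝ) (p q K : ℝ)
    (hmat_nonneg : ∀ n k, 0 ≤ a n k)
    (hmat_row : ∀ n, ∑ k ∈ Finset.range (n + 1), a n k = 1)
    (hK : 0 ≤ K)
    (hbound : ∀ n μ m, μ ≤ m → m ≤ n → a n μ ≤ (K + 1) * a n m)
    (hwmono : Monotone w)
    (hwsub : ∀ x y : ℝ, 0 ≤ x → 0 ≤ y → w (x + y) ≤ w x + w y)
    (hwnonneg : ∀ x, 0 ≤ w x)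
    (hHnonneg : ∀ u ∈ Set.Ioc (0:ℝ) π, 0 ≤ H u)
    (hp : 1 < p) (hpq : p ≤ q)
    (C₁ : ℝ) (hC₁ : 0 < C₁)
    (hcond6 : ∀ u ∈ Set.Ioc (0:ℝ) π,
      (u ^ (p / q) * ∫ t in u..π, (w t) ^ p / t ^ (1 + p / q)) ^ (1 / p)
        ≤ C₁ * (u * H u))
    (hdiag : ∀ n, a n n ∈ Set.Ioc (0:ℝ) π) :
    ∃ C : ℝ, 0 < C ∧ ∀ n : ℕ,
      ∑ k ∈ Finset.range (n + 1), a n k * (w (π / (k + 1))) ^ q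
        ≤ C * (a n n * H (a n n)) ^ q := by
  have hq : 0 < q := by linarith
  refine ⟨((2 ^ q + 1) * (K + 1) + 2) * (2 * π ^ (p / q)) ^ (q / p) * C₁ ^ q, by positivity,
    fun n => ?_⟩
  obtain ⟨hm, hmπ⟩ := hdiag n
  have hcond : (a n n ^ (p / q) * tailIntegral w p (p / q) (a n n)) ^ (q / p)
      ≤ (C₁ * (a n n * H (a n n))) ^ q :=
    rpow_div_le_rpow_of_rpow_one_div_le
      (mul_nonneg (by positivity) (tailIntegral_nonneg hwnonneg hm hmπ)) hq.le (hcond6 _ (hdiag n))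
  calc ∑ k ∈ range (n + 1), a n k * w (π / (k + 1)) ^ q
      ≤ ((2 ^ q + 1) * (K + 1) + 2) * (2 * π ^ (p / q)) ^ (q / p)
          * (a n n ^ (p / q) * tailIntegral w p (p / q) (a n n)) ^ (q / p) :=
        sum_mul_rpow_le_mul_rpow_tailIntegral hwmono hwnonneg hwsub (by linarith) hpq
          (hmat_nonneg n) (hmat_row n).le (fun k hk => hbound n k n hk le_rfl) hm
    _ ≤ ((2 ^ q + 1) * (K + 1) + 2) * (2 * π ^ (p / q)) ^ (q / p)
          * (C₁ * (a n n * H (a n n))) ^ q := by gcongr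
    _ = _ := by
        rw [mul_rpow hC₁.le (mul_nonneg hm.le (hHnonneg _ (hdiag n)))]
        ring

/-- The key estimate in the proof of Theorem 1:
`∑_{k=0}^n a_{n,k} w(π/(k+1))^q = O((a_{n,n} H(a_{n,n}))^q)`. -/
theorem matrix_modulus_sum_bound
    (a : ℕ → ℕ → ℝ) (w H : ℝ → ℝ) (p q K : ℝ)
    (hmat_nonneg : ∀ n k, 0 ≤ a n k)
    (hmat_tri : ∀ n k, n < k → a n k = 0)
    (hmat_row : ∀ n, ∑ k ∈ Finset.range (n + 1), a n k = 1)
    (hK : 0 ≤ K)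
    (hbound : ∀ n μ m, μ ≤ m → m ≤ n → a n μ ≤ (K + 1) * a n m)
    (hw0 : w 0 = 0) (hwmono : Monotone w) (hwcont : Continuous w)
    (hwsub : ∀ x y : ℝ, 0 ≤ x → 0 ≤ y → w (x + y) ≤ w x + w y)
    (hwnonneg : ∀ x, 0 ≤ w x)
    (hHnonneg : ∀ u ∈ Set.Ioc (0:ℝ) π, 0 ≤ H u)
    (hp : 1 < p) (hpq : p ≤ q)
    (C₁ C₂ : ℝ) (hC₁ : 0 < C₁) (hC₂ : 0 < C₂)
    (hcond6 : ∀ u ∈ Set.Ioc (0:ℝ) π,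
      (u ^ (p / q) * ∫ t in u..π, (w t) ^ p / t ^ (1 + p / q)) ^ (1 / p)
        ≤ C₁ * (u * H u))
    (hcond7 : ∀ t ∈ Set.Ioc (0:ℝ) π,
      (∫ u in (0:ℝ)..t, H u) ≤ C₂ * (t * H t))
    (hdiag : ∀ n, a n n ∈ Set.Ioc (0:ℝ) π)
    (hdiag0 : Filter.Tendsto (fun n => a n n) Filter.atTop (nhds 0)) :
    ∃ C : ℝ, 0 < C ∧ ∀ n : ℕ,
      ∑ k ∈ Finset.range (n + 1), a n k * (w (π / (k + 1))) ^ q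
        ≤ C * (a n n * H (a n n)) ^ q :=
  matrix_modulus_sum_bound_general a w H p q K hmat_nonneg hmat_row hK hbound hwmono hwsub hwnonneg
    hHnonneg hp hpq C₁ hC₁ hcond6 hdiag
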